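/- Let F : X → ℝ be a non-decreasing, differentiable, DR-submodular function on a compact rectangle X = ∏_{i=1}^n [ℓ_i, u_i] with ℓ_i < u_i for all i. Then for all x, x̂ ∈ X, F(x) ≤ F̃(x; x̂) ≤ F̆(x; x̂); i.e., the approximate first-order estimator F̆(·; x̂) is a global overestimator of F on X. -/

import Mathlib

/-!
Monotonicity gives `F x ≤ F (x ⊔ x̂)`. Raising the coordinates of `x̂` to those of `x ⊔ x̂` one
at a time, submodularity bounds each increment of `F` by the increment obtained when that
coordinate of `x̂` alone is raised, and concavity along the coordinate bounds the latter by the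
partial derivative at `x̂` times the step `[x_i - x̂_i]⁺`. The second inequality holds termwise:
the partial derivatives are nonnegative by monotonicity, and on `[ℓ_i, u_i]` the convex function
`t ↦ [t - x̂_i]⁺` lies below its chord `(u_i - x̂_i) / (u_i - ℓ_i) * (t - ℓ_i)`.
-/

open Set Function

section Lattice

variable {ι α : Type*} [DecidableEq ι] [Lattice α] {x y : ι → α}

lemma Finset.piecewise_sup_piecewise_of_le (hxy : x ≤ y) (S T : Finset ι) :
    S.piecewise y x ⊔ T.piecewise y x = (S ∪ T).piecewise y x := by
  ext j
  by_cases hS : j ∈ S <;> by_cases hT : j ∈ T <;> simp [hS, hT, hxy j]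

lemma Finset.piecewise_inf_piecewise_of_le (hxy : x ≤ y) (S T : Finset ι) :
    S.piecewise y x ⊓ T.piecewise y x = (S ∩ T).piecewise y x := by
  ext j
  by_cases hS : j ∈ S <;> by_cases hT : j ∈ T <;> simp [hS, hT, hxy j]

lemma le_add_sum_update_sub_of_submodularOn_Icc {ℓ u : ι → α} {F : (ι → α) → ℝ}
    (hsub : ∀ x ∈ Icc ℓ u, ∀ y ∈ Icc ℓ u, F (x ⊔ y) + F (x ⊓ y) ≤ F x + F y)
    (hx : x ∈ Icc ℓ u) (hy : y ∈ Icc ℓ u) (hxy : x ≤ y) (S : Finset ι) :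
    F (S.piecewise y x) ≤ F x + ∑ i ∈ S, (F (update x i (y i)) - F x) := by
  induction S using Finset.induction_on with
  | empty => simp
  | insert i S hiS ih =>
    have hmem : ∀ T : Finset ι, T.piecewise y x ∈ Icc ℓ u :=
      fun T => T.piecewise_mem_Icc_of_mem_of_mem hy hx
    have key := hsub _ (hmem S) _ (hmem {i})
    rw [Finset.piecewise_sup_piecewise_of_le hxy, Finset.piecewise_inf_piecewise_of_le hxy,
      Finset.inter_singleton_of_notMem hiS, Finset.piecewise_empty,
      Finset.union_singleton, Finset.piecewise_singleton] at key
    rw [Finset.sum_insert hiS]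
    linarith

end Lattice

lemma update_eq_add_single_sub {ι α : Type*} [DecidableEq ι] [AddCommGroup α] (x : ι → α) (i : ι)
    (a : α) :
    update x i a = x + Pi.single i (a - x i) := by
  ext j
  by_cases h : j = i <;> simp [h]

lemma add_single_mem_Icc_iff {ι α : Type*} [DecidableEq ι] [AddCommGroup α] [PartialOrder α]
    [IsOrderedAddMonoid α] {ℓ u x : ι → α} (hx : x ∈ Icc ℓ u) (i : ι) (t : α) :
    x + Pi.single i t ∈ Icc ℓ u ↔ t ∈ Icc (ℓ i - x i) (u i - x i) := by
  simp only [mem_Icc, sub_le_iff_le_add', le_sub_iff_add_le']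
  constructor
  · rintro ⟨h1, h2⟩
    simpa using And.intro (h1 i) (h2 i)
  · rintro ⟨h1, h2⟩
    refine ⟨fun j => ?_, fun j => ?_⟩ <;> by_cases h : j = i
    · subst h; simpa using h1
    · simpa [h] using hx.1 j
    · subst h; simpa using h2
    · simpa [h] using hx.2 j

lemma ConcaveOn.le_add_mul_sub_of_hasDerivAt {S : Set ℝ} {g : ℝ → ℝ} {a b d : ℝ}
    (hg : ConcaveOn ℝ S g) (ha : a ∈ S) (hb : b ∈ S) (hd : HasDerivAt g d a) :
    g b ≤ g a + d * (b - a) := by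
  rcases lt_trichotomy a b with hab | rfl | hab
  · have := hg.slope_le_of_hasDerivAt ha hb hab hd
    rw [slope_def_field, div_le_iff₀ (sub_pos.mpr hab)] at this
    linarith
  · simp
  · have := hg.le_slope_of_hasDerivAt hb ha hab hd
    rw [slope_def_field, le_div_iff₀ (sub_pos.mpr hab)] at this
    linarith

lemma HasDerivAt.nonneg_of_monotoneOn_Icc {g : ℝ → ℝ} {a b t d : ℝ} (hab : a < b)
    (ht : t ∈ Icc a b) (hd : HasDerivAt g d t) (hg : MonotoneOn g (Icc a b)) : 0 ≤ d :=
  hd.hasDerivWithinAt.derivWithin (uniqueDiffOn_Icc hab t ht) ▸ hg.derivWithin_nonneg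

section Partial

variable {ι : Type*} [Fintype ι] [DecidableEq ι] {F : (ι → ℝ) → ℝ} {x : ι → ℝ}

lemma DifferentiableAt.hasDerivAt_add_single (hF : DifferentiableAt ℝ F x) (i : ι) :
    HasDerivAt (fun t : ℝ => F (x + Pi.single i t)) (fderiv ℝ F x (Pi.single i 1)) 0 := by
  simpa [HasLineDerivAt, ← Pi.single_smul'] using hF.hasFDerivAt.hasLineDerivAt (Pi.single i 1)

lemma update_sub_le_fderiv_mul {S : Set (ι → ℝ)} {i : ι} {a : ℝ} (hF : DifferentiableAt ℝ F x)
    (hconc : ConcaveOn ℝ {t : ℝ | x + Pi.single i t ∈ S} (fun t : ℝ => F (x + Pi.single i t)))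
    (hx : x ∈ S) (ha : update x i a ∈ S) :
    F (update x i a) - F x ≤ fderiv ℝ F x (Pi.single i 1) * (a - x i) := by
  rw [update_eq_add_single_sub] at ha ⊢
  have htangent := hconc.le_add_mul_sub_of_hasDerivAt (a := 0) (by simpa using hx) ha
    (hF.hasDerivAt_add_single i)
  simp only [Pi.single_zero, add_zero, sub_zero] at htangent
  linarith

lemma fderiv_single_nonneg_of_monotoneOn {ℓ u : ι → ℝ} {i : ι} (hlu : ℓ i < u i)
    (hx : x ∈ Icc ℓ u) (hF : DifferentiableAt ℝ F x) (hmono : MonotoneOn F (Icc ℓ u)) :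
    0 ≤ fderiv ℝ F x (Pi.single i 1) := by
  refine (hF.hasDerivAt_add_single i).nonneg_of_monotoneOn_Icc (a := ℓ i - x i) (b := u i - x i)
    (by linarith) ⟨by simpa using hx.1 i, by simpa using hx.2 i⟩ ?_
  intro s hs t ht hst
  exact hmono ((add_single_mem_Icc_iff hx i s).mpr hs) ((add_single_mem_Icc_iff hx i t).mpr ht)
    (add_le_add_right (Pi.single_mono i hst) x)

end Partial

lemma max_sub_zero_le_div_mul_sub {ℓ u a b : ℝ} (hℓu : ℓ < u) (ha : a ∈ Icc ℓ u)
    (hb : b ∈ Icc ℓ u) : max (a - b) 0 ≤ (u - b) / (u - ℓ) * (a - ℓ) := by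
  have hℓu' : 0 < u - ℓ := sub_pos.mpr hℓu
  refine max_le ?_ ?_
  · rw [div_mul_eq_mul_div, le_div_iff₀ hℓu']
    nlinarith [ha.2, hb.1]
  · exact mul_nonneg (div_nonneg (sub_nonneg.mpr hb.2) hℓu'.le) (sub_nonneg.mpr ha.1)

theorem stmt_10_general {n : ℕ} (ℓ u : Fin n → ℝ) (hlu : ∀ i, ℓ i < u i)
    (F : (Fin n → ℝ) → ℝ) (hdiff : Differentiable ℝ F)
    (hsub : ∀ x ∈ Set.Icc ℓ u, ∀ y ∈ Set.Icc ℓ u, F (x ⊔ y) + F (x ⊓ y) ≤ F x + F y)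
    (hconc : ∀ (i : Fin n), ∀ x ∈ Set.Icc ℓ u,
      ConcaveOn ℝ {t : ℝ | x + Pi.single i t ∈ Set.Icc ℓ u}
        (fun t : ℝ => F (x + Pi.single i t)))
    (hmono : ∀ x ∈ Set.Icc ℓ u, ∀ y ∈ Set.Icc ℓ u, x ≤ y → F x ≤ F y)
    (x xh : Fin n → ℝ) (hx : x ∈ Set.Icc ℓ u) (hxh : xh ∈ Set.Icc ℓ u) :
    F x ≤ F xh + ∑ i : Fin n, fderiv ℝ F xh (Pi.single i 1) * max (x i - xh i) 0
    ∧ F xh + ∑ i : Fin n, fderiv ℝ F xh (Pi.single i 1) * max (x i - xh i) 0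
      ≤ F xh + ∑ i : Fin n,
          fderiv ℝ F xh (Pi.single i 1) * ((u i - xh i) / (u i - ℓ i)) * (x i - ℓ i) := by
  have hmonoOn : MonotoneOn F (Icc ℓ u) := fun a ha b hb => hmono a ha b hb
  have hsup : x ⊔ xh ∈ Icc ℓ u := ⟨le_sup_of_le_left hx.1, sup_le hx.2 hxh.2⟩
  refine ⟨?_, ?_⟩
  · calc F x ≤ F (x ⊔ xh) := hmonoOn hx hsup le_sup_left
      _ ≤ F xh + ∑ i, (F (update xh i ((x ⊔ xh) i)) - F xh) := by
        simpa using le_add_sum_update_sub_of_submodularOn_Icc hsub hxh hsup le_sup_right .univ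
      _ ≤ _ := by
        gcongr with i
        rw [show max (x i - xh i) 0 = (x ⊔ xh) i - xh i by
          rw [Pi.sup_apply, ← max_sub_sub_right, sub_self]]
        refine update_sub_le_fderiv_mul (hdiff xh) (hconc i xh hxh) hxh ?_
        rw [← Finset.piecewise_singleton]
        exact Finset.piecewise_mem_Icc_of_mem_of_mem _ hsup hxh
  · gcongr F xh + ∑ i, ?_ with i
    rw [mul_assoc]
    exact mul_le_mul_of_nonneg_left
      (max_sub_zero_le_div_mul_sub (hlu i) ⟨hx.1 i, hx.2 i⟩ ⟨hxh.1 i, hxh.2 i⟩)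
      (fderiv_single_nonneg_of_monotoneOn (hlu i) hxh (hdiff xh) hmonoOn)

/-- the approximate first-order estimator globally overestimates `F`.
For a non-decreasing, differentiable, DR-submodular `F` on the compact rectangle
`X = Icc ℓ u` (with `ℓ i < u i`), for all `x, x̂ ∈ X`,
`F x ≤ F̃(x; x̂) ≤ F̆(x; x̂)`, where
`F̃(x; x̂) = F x̂ + ∑ i (∂F/∂x_i)(x̂)·[x_i − x̂_i]⁺` and
`F̆(x; x̂) = F x̂ + ∑ i (∂F/∂x_i)(x̂)·((u_i − x̂_i)/(u_i − ℓ_i))·(x_i − ℓ_i)`.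
(`xh` plays the role of `x̂`.) -/
theorem stmt_10 {n : ℕ} (hn : 1 ≤ n) (ℓ u : Fin n → ℝ) (hlu : ∀ i, ℓ i < u i)
    (F : (Fin n → ℝ) → ℝ) (hdiff : Differentiable ℝ F)
    (hsub : ∀ x ∈ Set.Icc ℓ u, ∀ y ∈ Set.Icc ℓ u, F (x ⊔ y) + F (x ⊓ y) ≤ F x + F y)
    (hconc : ∀ (i : Fin n), ∀ x ∈ Set.Icc ℓ u,
      ConcaveOn ℝ {t : ℝ | x + Pi.single i t ∈ Set.Icc ℓ u}
        (fun t : ℝ => F (x + Pi.single i t)))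
    (hmono : ∀ x ∈ Set.Icc ℓ u, ∀ y ∈ Set.Icc ℓ u, x ≤ y → F x ≤ F y)
    (x xh : Fin n → ℝ) (hx : x ∈ Set.Icc ℓ u) (hxh : xh ∈ Set.Icc ℓ u) :
    F x ≤ F xh + ∑ i : Fin n, fderiv ℝ F xh (Pi.single i 1) * max (x i - xh i) 0
    ∧ F xh + ∑ i : Fin n, fderiv ℝ F xh (Pi.single i 1) * max (x i - xh i) 0
      ≤ F xh + ∑ i : Fin n,
          fderiv ℝ F xh (Pi.single i 1) * ((u i - xh i) / (u i - ℓ i)) * (x i - ℓ i) :=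
  stmt_10_general ℓ u hlu F hdiff hsub hconc hmono x xh hx hxh
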